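/- arXiv:1805.09271 — 7 statements merged into one kernel-verified Lean document; each statement's English description precedes it below -/
import Mathlib

section
/- Let m_1, …, m_r be a check set on n qubits with syndrome map σ and stabilizer span S, let H : F2^r → F2^l be a metacheck matrix for it, and suppose the check set is (t, f)-sound where f : ℕ → ℝ is monotone nondecreasing with f(0) = 0. Then there exists a decoder, i.e. a function D : F2^r → F2^n × F2^n, such that for every physical error e ∈ F2^n × F2^n and measurement error u ∈ F2^r satisfying (i) every y ∈ F2^r with H y = 0 and |y| ≤ 2|u| lies in the image of σ, (ii) 2|u| < t, and (iii) every e' with σ(e') = 0 and wt(e') ≤ 2·(f(2|u|) + wt(e)) lies in S, the recovery E_rec := D(σ(e) + u) satisfies wt_min(e + E_rec) ≤ f(2|u|). (Conditions (i) and (iii) express 2|u| < d_ss and f(2|u|) + wt(e) < d_Q/2.) -/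
open Finset

abbrev F2 := ZMod 2

abbrev Pauli (n : ℕ) := (Fin n → F2) × (Fin n → F2)

/-- Hamming weight of a vector over `F2`. -/
def vwt {ι : Type*} [Fintype ι] (v : ι → F2) : ℕ :=
  (Finset.univ.filter fun i => v i ≠ 0).card

/-- Weight of a Pauli operator: number of qubits on which it acts nontrivially. -/
def pwt {n : ℕ} (e : Pauli n) : ℕ :=
  (Finset.univ.filter fun i => e.1 i ≠ 0 ∨ e.2 i ≠ 0).card

/-- Symplectic product of two Pauli operators. -/
def symp {n : ℕ} (e e' : Pauli n) : F2 :=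
  (∑ i, e.1 i * e'.2 i) + (∑ i, e.2 i * e'.1 i)

/-- Syndrome map of a check set. -/
def synd {n r : ℕ} (m : Fin r → Pauli n) (e : Pauli n) : Fin r → F2 :=
  fun i => symp (m i) e

/-- Stabilizer span of a check set. -/
def stab {n r : ℕ} (m : Fin r → Pauli n) : Submodule F2 (Pauli n) :=
  Submodule.span F2 (Set.range m)

/-- Minimum weight of a Pauli modulo the stabilizer span. -/
noncomputable def wtmin {n r : ℕ} (m : Fin r → Pauli n) (e : Pauli n) : ℕ :=
  sInf {w | ∃ s ∈ stab m, w = pwt (e + s)}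

/-- `(t, f)`-soundness of a check set. -/
def IsSound {n r : ℕ} (m : Fin r → Pauli n) (t : ℕ) (f : ℕ → ℝ) : Prop :=
  ∀ e : Pauli n, vwt (synd m e) < t →
    ∃ e' : Pauli n, synd m e' = synd m e ∧ (pwt e' : ℝ) ≤ f (vwt (synd m e))

lemma f2_add_self : ∀ x : F2, x + x = 0 := by decide

lemma vwt_add_le {ι : Type*} [Fintype ι] (u v : ι → F2) : vwt (u + v) ≤ vwt u + vwt v := by
  classical
  unfold vwt
  refine le_trans (Finset.card_le_card ?_) (Finset.card_union_le _ _)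
  intro i hi
  simp only [mem_filter, mem_union, mem_univ, true_and] at *
  by_contra hc
  push_neg at hc
  simp [Pi.add_apply, hc.1, hc.2] at hi

lemma pwt_add_le {n : ℕ} (a b : Pauli n) : pwt (a + b) ≤ pwt a + pwt b := by
  classical
  unfold pwt
  refine le_trans (Finset.card_le_card ?_) (Finset.card_union_le _ _)
  intro i hi
  simp only [mem_filter, mem_union, mem_univ, true_and] at *
  by_contra hc
  push_neg at hc
  simp [Prod.fst_add, Prod.snd_add, Pi.add_apply, hc.1.1, hc.1.2, hc.2.1, hc.2.2] at hi

lemma pwt_le_n {n : ℕ} (a : Pauli n) : pwt a ≤ n := by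
  unfold pwt
  exact le_trans (Finset.card_filter_le _ _) (by simp)

lemma synd_add {n r : ℕ} (m : Fin r → Pauli n) (a b : Pauli n) :
    synd m (a + b) = synd m a + synd m b := by
  funext i
  show symp (m i) (a + b) = symp (m i) a + symp (m i) b
  unfold symp
  simp only [Prod.fst_add, Prod.snd_add, Pi.add_apply, mul_add, Finset.sum_add_distrib]
  ring

lemma pauli_add_self {n : ℕ} (a : Pauli n) : a + a = 0 := by
  refine Prod.ext ?_ ?_ <;> funext i <;> exact f2_add_self _

/-- Single-shot success, Theorem 1: a sound check set admits a single-shot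
decoder whose residual error is controlled by the soundness function. -/
theorem single_shot_success
    (n r l t : ℕ) (m : Fin r → Pauli n)
    (hcomm : ∀ i j, symp (m i) (m j) = 0)
    (H : Matrix (Fin l) (Fin r) F2)
    (hmeta : ∀ e : Pauli n, H.mulVec (synd m e) = 0)
    (f : ℕ → ℝ) (hf0 : f 0 = 0) (hfmono : Monotone f)
    (hsound : IsSound m t f) :
    ∃ D : (Fin r → F2) → Pauli n,
      ∀ (e : Pauli n) (u : Fin r → F2),
        (∀ y : Fin r → F2, H.mulVec y = 0 → vwt y ≤ 2 * vwt u →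
            ∃ e' : Pauli n, synd m e' = y) →
        2 * vwt u < t →
        (∀ e' : Pauli n, synd m e' = 0 →
            (pwt e' : ℝ) ≤ 2 * (f (2 * vwt u) + (pwt e : ℝ)) → e' ∈ stab m) →
        (wtmin m (e + D (synd m e + u)) : ℝ) ≤ f (2 * vwt u) := by
  classical
  -- the decoder: minimize (syndrome repair weight, error weight) lexicographically
  have hmin : ∀ s : Fin r → F2, ∃ a : Pauli n, ∀ b : Pauli n,
      vwt (s + synd m a) * (n + 1) + pwt a ≤ vwt (s + synd m b) * (n + 1) + pwt b := by
    intro s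
    obtain ⟨a, -, ha⟩ := Finset.exists_min_image (Finset.univ : Finset (Pauli n))
      (fun b => vwt (s + synd m b) * (n + 1) + pwt b) ⟨0, Finset.mem_univ 0⟩
    exact ⟨a, fun b => ha b (Finset.mem_univ b)⟩
  refine ⟨fun s => Classical.choose (hmin s), ?_⟩
  intro e u _hss hlt hdist
  show (wtmin m (e + Classical.choose (hmin (synd m e + u))) : ℝ) ≤ f (2 * vwt u)
  set s := synd m e + u with hs
  set E := Classical.choose (hmin s) with hE
  have hEmin : ∀ b : Pauli n,
      vwt (s + synd m E) * (n + 1) + pwt E ≤ vwt (s + synd m b) * (n + 1) + pwt b :=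
    Classical.choose_spec (hmin s)
  have hse : s + synd m e = u := by
    funext i
    simp only [hs, Pi.add_apply]
    have h2 : ∀ a b : F2, a + b + a = b := by decide
    exact h2 _ _
  -- the repaired syndrome is within vwt u of the observed one
  have hA : vwt (s + synd m E) ≤ vwt u := by
    have h1 := hEmin e
    rw [hse] at h1
    by_contra hc
    push_neg at hc
    have hle : (vwt u + 1) * (n + 1) ≤ vwt (s + synd m E) * (n + 1) :=
      Nat.mul_le_mul_right _ (Nat.succ_le_of_lt hc)
    have hx : (vwt u + 1) * (n + 1) = vwt u * (n + 1) + (n + 1) := by ring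
    have hpe := pwt_le_n e
    linarith
  -- syndrome of the residual error e + E
  have hsynd_sum : synd m (e + E) = u + (s + synd m E) := by
    rw [synd_add]
    funext i
    simp only [Pi.add_apply, hs]
    have h3 : ∀ a b c : F2, a + b = c + (a + c + b) := by decide
    exact h3 _ _ _
  have hwle : vwt (synd m (e + E)) ≤ 2 * vwt u := by
    rw [hsynd_sum]
    calc vwt (u + (s + synd m E)) ≤ vwt u + vwt (s + synd m E) := vwt_add_le _ _
      _ ≤ vwt u + vwt u := Nat.add_le_add_left hA _
      _ = 2 * vwt u := by ring
  -- apply soundness to e + E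
  obtain ⟨e', he'synd, he'wt⟩ := hsound (e + E) (lt_of_le_of_lt hwle hlt)
  have he'f : (pwt e' : ℝ) ≤ f (2 * vwt u) := le_trans he'wt (hfmono hwle)
  -- E is no heavier than e + e'
  have hc_synd : synd m (e + e') = synd m E := by
    rw [synd_add, he'synd, synd_add]
    funext i
    simp only [Pi.add_apply]
    have h4 : ∀ a b : F2, a + (a + b) = b := by decide
    exact h4 _ _
  have hEle : pwt E ≤ pwt (e + e') := by
    have h1 := hEmin (e + e')
    rw [hc_synd] at h1
    linarith
  -- the residual error modulo e' is a stabilizer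
  have hres_synd : synd m ((e + E) + e') = 0 := by
    rw [synd_add, he'synd]
    exact funext fun i => f2_add_self _
  have hres_wt : (pwt ((e + E) + e') : ℝ) ≤ 2 * (f (2 * vwt u) + (pwt e : ℝ)) := by
    have h1 : pwt ((e + E) + e') ≤ pwt (e + e') + pwt E := by
      have heq : (e + E) + e' = (e + e') + E := by abel
      rw [heq]
      exact pwt_add_le _ _
    have h2 : pwt (e + e') ≤ pwt e + pwt e' := pwt_add_le _ _
    have h3 : pwt ((e + E) + e') ≤ 2 * pwt e + 2 * pwt e' := by omega
    have h4 : (pwt ((e + E) + e') : ℝ) ≤ 2 * (pwt e : ℝ) + 2 * (pwt e' : ℝ) := by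
      exact_mod_cast h3
    linarith
  have hstab : (e + E) + e' ∈ stab m := hdist _ hres_synd hres_wt
  have hEe' : (e + E) + ((e + E) + e') = e' := by
    rw [← add_assoc, pauli_add_self, zero_add]
  have hle2 : wtmin m (e + E) ≤ pwt e' := by
    apply Nat.sInf_le
    exact ⟨(e + E) + e', hstab, by rw [hEe']⟩
  calc (wtmin m (e + E) : ℝ) ≤ (pwt e' : ℝ) := by exact_mod_cast hle2
    _ ≤ f (2 * vwt u) := he'f
end

section
/- (Energy barrier from soundness.) Let m_1, …, m_r be a check set on n qubits with syndrome map σ and stabilizer span S. Suppose each qubit is involved in at most C checks, i.e. for every index i ∈ {1,…,n} the number of j with ((m_j)_{x,i}, (m_j)_{z,i}) ≠ (0,0) is at most C. Suppose the check set is (t, f)-sound with f : ℕ → ℝ monotone nondecreasing. Let w ∈ ℕ satisfy C·w < t, and assume every e with σ(e) = 0 and wt(e) ≤ 2w lies in S (i.e. 2w < d_Q). Then for every sequence e_0, e_1, …, e_L in F2^n × F2^n with e_0 = 0, wt(e_j + e_{j-1}) = 1 for every j ∈ {1,…,L}, σ(e_L) = 0 and e_L ∉ S, there exists some j with w ≤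 f(|σ(e_j)|). (Since the energy penalty of the Pauli error e_j for the Hamiltonian H = −Σ_j M_j is 2|σ(e_j)|, this says the energy barrier between orthogonal ground states is at least 2·f⁻¹(w).) -/
open Finset

lemma symp_add_right {n : ℕ} (e a b : Pauli n) :
    symp e (a + b) = symp e a + symp e b := by
  simp only [symp, Prod.fst_add, Prod.snd_add, Pi.add_apply, mul_add,
    Finset.sum_add_distrib]
  ring

lemma symp_smul_right {n : ℕ} (e : Pauli n) (c : F2) (a : Pauli n) :
    symp e (c • a) = c * symp e a := by
  simp only [symp, Prod.smul_fst, Prod.smul_snd, Pi.smul_apply, smul_eq_mul,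
    mul_add, Finset.mul_sum]
  congr 1 <;> exact Finset.sum_congr rfl fun i _ => by ring

noncomputable def syndLM {n r : ℕ} (m : Fin r → Pauli n) : Pauli n →ₗ[F2] (Fin r → F2) where
  toFun := synd m
  map_add' a b := funext fun i => symp_add_right (m i) a b
  map_smul' c a := funext fun i => symp_smul_right (m i) c a

lemma synd_stab {n r : ℕ} (m : Fin r → Pauli n)
    (hcomm : ∀ i j, symp (m i) (m j) = 0) {s : Pauli n} (hs : s ∈ stab m) :
    synd m s = 0 := by
  have : stab m ≤ LinearMap.ker (syndLM m) := by
    rw [stab, Submodule.span_le]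
    rintro _ ⟨j, rfl⟩
    exact funext fun i => hcomm i j
  exact this hs

lemma vwt_synd_le {n r C : ℕ} (m : Fin r → Pauli n)
    (hLDPC : ∀ i : Fin n,
      (Finset.univ.filter fun j : Fin r => (m j).1 i ≠ 0 ∨ (m j).2 i ≠ 0).card ≤ C)
    (e : Pauli n) : vwt (synd m e) ≤ C * pwt e := by
  unfold vwt pwt
  have hsub : (Finset.univ.filter fun j => synd m e j ≠ 0) ⊆
      (Finset.univ.filter fun i => e.1 i ≠ 0 ∨ e.2 i ≠ 0).biUnion
        (fun i => Finset.univ.filter fun j : Fin r => (m j).1 i ≠ 0 ∨ (m j).2 i ≠ 0) := by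
    intro j hj
    simp only [mem_filter, mem_univ, true_and] at hj
    simp only [mem_biUnion, mem_filter, mem_univ, true_and]
    by_contra h
    push_neg at h
    apply hj
    show symp (m j) e = 0
    unfold symp
    have h1 : ∀ i, (m j).1 i * e.2 i = 0 := by
      intro i
      by_cases he : e.1 i ≠ 0 ∨ e.2 i ≠ 0
      · have := h i he
        rw [this.1, zero_mul]
      · push_neg at he
        rw [he.2, mul_zero]
    have h2 : ∀ i, (m j).2 i * e.1 i = 0 := by
      intro i
      by_cases he : e.1 i ≠ 0 ∨ e.2 i ≠ 0
      · have := h i he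
        rw [this.2, zero_mul]
      · push_neg at he
        rw [he.1, mul_zero]
    simp [h1, h2]
  calc (Finset.univ.filter fun j => synd m e j ≠ 0).card
      ≤ _ := Finset.card_le_card hsub
    _ ≤ ∑ i ∈ (Finset.univ.filter fun i => e.1 i ≠ 0 ∨ e.2 i ≠ 0),
          (Finset.univ.filter fun j : Fin r => (m j).1 i ≠ 0 ∨ (m j).2 i ≠ 0).card :=
        Finset.card_biUnion_le
    _ ≤ ∑ _i ∈ (Finset.univ.filter fun i => e.1 i ≠ 0 ∨ e.2 i ≠ 0), C :=
        Finset.sum_le_sum fun i _ => hLDPC i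
    _ = _ := by rw [Finset.sum_const, smul_eq_mul, mul_comm]

lemma wtmin_nonempty {n r : ℕ} (m : Fin r → Pauli n) (e : Pauli n) :
    {w | ∃ s ∈ stab m, w = pwt (e + s)}.Nonempty :=
  ⟨pwt (e + 0), 0, (stab m).zero_mem, rfl⟩

lemma wtmin_le {n r : ℕ} (m : Fin r → Pauli n) (e s : Pauli n) (hs : s ∈ stab m) :
    wtmin m e ≤ pwt (e + s) := Nat.sInf_le ⟨s, hs, rfl⟩

lemma wtmin_spec {n r : ℕ} (m : Fin r → Pauli n) (e : Pauli n) :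
    ∃ s ∈ stab m, wtmin m e = pwt (e + s) :=
  Nat.sInf_mem (wtmin_nonempty m e)

lemma wtmin_step {n r : ℕ} (m : Fin r → Pauli n) (a u : Pauli n) :
    wtmin m (a + u) ≤ wtmin m a + pwt u := by
  obtain ⟨s, hs, h⟩ := wtmin_spec m a
  calc wtmin m (a + u) ≤ pwt (a + u + s) := wtmin_le m _ s hs
    _ = pwt ((a + s) + u) := by ring_nf
    _ ≤ pwt (a + s) + pwt u := pwt_add_le _ _
    _ = wtmin m a + pwt u := by rw [h]

lemma nat_ivt (g : ℕ → ℕ) (hstep : ∀ k, g (k + 1) ≤ g k + 1)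
    (w : ℕ) (L : ℕ) (h0 : g 0 ≤ w) (hL : w ≤ g L) : ∃ j ≤ L, g j = w := by
  induction L with
  | zero => exact ⟨0, le_refl 0, le_antisymm h0 hL⟩
  | succ L ih =>
    by_cases h : w ≤ g L
    · obtain ⟨j, hj, hgj⟩ := ih h
      exact ⟨j, le_trans hj (Nat.le_succ L), hgj⟩
    · push_neg at h
      refine ⟨L + 1, le_refl _, le_antisymm ?_ hL⟩
      calc g (L + 1) ≤ g L + 1 := hstep L
        _ ≤ w := h

lemma f2vec_add_self {ι : Type*} (v : ι → F2) : v + v = 0 :=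
  funext fun i => by
    have : ∀ x : F2, x + x = 0 := by decide
    exact this (v i)

lemma pwt_zero {n : ℕ} : pwt (0 : Pauli n) = 0 := by
  simp [pwt]


/-- Lemma 4: energy barrier from soundness: along any walk of Pauli errors
from the identity to a nontrivial logical operator by single-qubit steps, some intermediate
error has a syndrome with `w ≤ f(|σ(e_j)|)`. -/
theorem energy_barrier_from_soundness
    (n r t C w : ℕ) (m : Fin r → Pauli n)
    (hcomm : ∀ i j, symp (m i) (m j) = 0)
    (hLDPC : ∀ i : Fin n,
      (Finset.univ.filter fun j : Fin r => (m j).1 i ≠ 0 ∨ (m j).2 i ≠ 0).card ≤ C)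
    (f : ℕ → ℝ) (hfmono : Monotone f)
    (hsound : IsSound m t f)
    (hwt : C * w < t)
    (hdQ : ∀ e : Pauli n, synd m e = 0 → pwt e ≤ 2 * w → e ∈ stab m)
    (L : ℕ) (es : Fin (L + 1) → Pauli n)
    (h0 : es 0 = 0)
    (hstep : ∀ j : Fin L, pwt (es j.succ + es j.castSucc) = 1)
    (hcycle : synd m (es (Fin.last L)) = 0)
    (hlogical : es (Fin.last L) ∉ stab m) :
    ∃ j : Fin (L + 1), (w : ℝ) ≤ f (vwt (synd m (es j))) := by
  by_contra hcon
  push_neg at hcon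
  set g : ℕ → ℕ := fun k => wtmin m (es ⟨min k L, by omega⟩) with hg
  have hgstep : ∀ k, g (k + 1) ≤ g k + 1 := by
    intro k
    by_cases hk : k < L
    · have hmin1 : min (k + 1) L = k + 1 := by omega
      have hmin0 : min k L = k := by omega
      have j : Fin L := ⟨k, hk⟩
      have hs1 : (⟨min (k + 1) L, by omega⟩ : Fin (L + 1)) = (⟨k, hk⟩ : Fin L).succ := by
        apply Fin.ext; simp [hmin1]
      have hs0 : (⟨min k L, by omega⟩ : Fin (L + 1)) = (⟨k, hk⟩ : Fin L).castSucc := by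
        apply Fin.ext; simp [hmin0]
      set a := es (⟨k, hk⟩ : Fin L).castSucc with ha
      set b := es (⟨k, hk⟩ : Fin L).succ with hb
      have hrw : b = a + (b + a) := by
        rw [add_comm b a, ← add_assoc, pauli_add_self, zero_add]
      have : g (k + 1) = wtmin m b := by rw [hg]; simp only; rw [hs1]
      rw [this]
      have hga : g k = wtmin m a := by rw [hg]; simp only; rw [hs0]
      rw [hga]
      calc wtmin m b = wtmin m (a + (b + a)) := by rw [← hrw]
        _ ≤ wtmin m a + pwt (b + a) := wtmin_step m a (b + a)
        _ = wtmin m a + 1 := by rw [hstep ⟨k, hk⟩]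
    · have hmm : min (k + 1) L = min k L := by omega
      simp only [hg, hmm]
      exact le_trans (le_refl _) (Nat.le_succ _)
  have hg0 : g 0 = 0 := by
    have : (⟨min 0 L, by omega⟩ : Fin (L + 1)) = 0 := by apply Fin.ext; simp
    simp only [hg, this, h0]
    have h1 := wtmin_le m (0 : Pauli n) 0 (stab m).zero_mem
    rw [add_zero, pwt_zero] at h1
    exact Nat.le_zero.mp h1
  have hgL : w ≤ g L := by
    have hlast : (⟨min L L, by omega⟩ : Fin (L + 1)) = Fin.last L := by
      apply Fin.ext; simp [Fin.last]
    simp only [hg, hlast]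
    by_contra hle
    push_neg at hle
    obtain ⟨s, hs, hrep⟩ := wtmin_spec m (es (Fin.last L))
    have hsyn : synd m (es (Fin.last L) + s) = 0 := by
      rw [synd_add, hcycle, synd_stab m hcomm hs, add_zero]
    have hwle : pwt (es (Fin.last L) + s) ≤ 2 * w := by omega
    have hmem := hdQ _ hsyn hwle
    have : es (Fin.last L) ∈ stab m := by
      have h2 : es (Fin.last L) = (es (Fin.last L) + s) + s := by
        rw [add_assoc, pauli_add_self, add_zero]
      rw [h2]; exact (stab m).add_mem hmem hs
    exact hlogical this
  obtain ⟨k, hkL, hgk⟩ := nat_ivt g hgstep w L (by omega) hgL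
  set jk : Fin (L + 1) := ⟨min k L, by omega⟩ with hjk
  set e := es jk with he
  obtain ⟨s, hs, hrep⟩ := wtmin_spec m e
  have hpwt : pwt (e + s) = w := by rw [← hrep]; exact hgk
  have hsyneq : synd m (e + s) = synd m e := by
    rw [synd_add, synd_stab m hcomm hs, add_zero]
  have hvlt : vwt (synd m (e + s)) < t := by
    calc vwt (synd m (e + s)) ≤ C * pwt (e + s) := vwt_synd_le m hLDPC _
      _ = C * w := by rw [hpwt]
      _ < t := hwt
  obtain ⟨e', hsyn', hwt'⟩ := hsound _ hvlt
  have hflt : f (vwt (synd m (e + s))) < (w : ℝ) := by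
    rw [hsyneq]; exact hcon jk
  have hplt : pwt e' < w := by
    have : (pwt e' : ℝ) < (w : ℝ) := lt_of_le_of_lt hwt' hflt
    exact_mod_cast this
  have hsynz : synd m (e + s + e') = 0 := by
    rw [synd_add, hsyn', f2vec_add_self]
  have hple : pwt (e + s + e') ≤ 2 * w := by
    calc pwt (e + s + e') ≤ pwt (e + s) + pwt e' := pwt_add_le _ _
      _ ≤ w + w := by omega
      _ = 2 * w := by omega
  have hmem := hdQ _ hsynz hple
  have hstab2 : s + (e + s + e') ∈ stab m := (stab m).add_mem hs hmem
  have hkey : e + (s + (e + s + e')) = e' := by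
    have : e + (s + (e + s + e')) = (e + s) + (e + s) + e' := by ring_nf
    rw [this, pauli_add_self, zero_add]
  have : wtmin m e ≤ pwt e' := by
    have := wtmin_le m e _ hstab2
    rwa [hkey] at this
  omega
end

section
/- Let S be an F2-linear subspace of F2^n × F2^n of dimension n − k on which the symplectic product vanishes identically (the stabilizer of an [[n, k]] stabilizer code, modulo phases). Then there exist a basis m_1, …, m_{n−k} of S and vectors e_1, …, e_{n−k} ∈ F2^n × F2^n, each of weight wt(e_j) = 1 (single-qubit Pauli errors), such that ⟨m_i, e_j⟩ = 1 if i = j and ⟨m_i, e_j⟩ = 0 if i ≠ j. -/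
open Finset

/-! The symplectic product with the single-qubit Paulis `X_i`, `Z_i` reads off the coordinates of a
Pauli, so the functionals `⟨·, e⟩` with `wt e = 1`, restricted to `S`, separate the points of `S`
and therefore span its dual. A basis of the dual chosen among them is the dual basis of a basis
`m₁, …, m_{n-k}` of `S`, and the weight-one `e_j` giving it are the required pure errors. -/

open Module

theorem Submodule.span_range_domRestrict_eq_top {K V ι : Type*} [Field K] [AddCommGroup V]
    [Module K V] (S : Submodule K V) [FiniteDimensional K S] {φ : ι → Dual K V}
    (hφ : ∀ s ∈ S, (∀ i, φ i s = 0) → s = 0) :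
    Submodule.span K (Set.range fun i => (φ i).domRestrict S) = ⊤ := by
  set W := Submodule.span K (Set.range fun i => (φ i).domRestrict S)
  have hW : W.dualCoannihilator = ⊥ := by
    refine (Submodule.eq_bot_iff _).mpr fun s hs => Subtype.ext <| hφ s s.2 fun i => ?_
    exact (Submodule.mem_dualCoannihilator s).mp hs _ (subset_span ⟨i, rfl⟩)
  calc W = W.dualCoannihilator.dualAnnihilator := Subspace.dualCoannihilator_dualAnnihilator_eq.symm
    _ = ⊤ := by rw [hW, Submodule.dualAnnihilator_bot]

theorem Module.exists_basis_coord_eq_of_span_range_eq_top {K V ι : Type*} [Field K]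
    [AddCommGroup V] [Module K V] [FiniteDimensional K V] {d : ℕ} (hd : finrank K V = d)
    {g : ι → Dual K V} (hg : Submodule.span K (Set.range g) = ⊤) :
    ∃ (b : Basis (Fin d) K V) (σ : Fin d → ι), ∀ j, g (σ j) = b.coord j := by
  let f₀ := Basis.ofSpan hg.ge
  let f := f₀.reindex (f₀.indexEquiv (finBasisOfFinrankEq K (Dual K V)
    (Subspace.dual_finrank_eq.trans hd)))
  have hf : ∀ j, f j ∈ Set.range g :=
    fun j => Basis.ofSpan_subset hg.ge (by rw [← f₀.range_reindex]; exact ⟨j, rfl⟩)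
  choose σ hσ using hf
  let b := f.dualBasis.map (evalEquiv K V).symm
  refine ⟨b, σ, fun j => b.ext fun i => ?_⟩
  rw [hσ, Basis.coord_apply, Basis.repr_self, Finsupp.single_apply, Basis.map_apply,
    apply_evalEquiv_symm_apply, Basis.dualBasis_apply_self]
  simp only [eq_comm]

def sympDual {n : ℕ} (e : Pauli n) : Dual F2 (Pauli n) where
  toFun s := symp s e
  map_add' a b := by
    simp only [symp, Prod.fst_add, Prod.snd_add, Pi.add_apply, add_mul, Finset.sum_add_distrib]
    abel
  map_smul' c a := by
    simp [symp, Finset.mul_sum, mul_add, mul_assoc]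

lemma pwt_single_X {n : ℕ} (i : Fin n) : pwt ((Pi.single i 1, 0) : Pauli n) = 1 := by
  simp [pwt, Pi.single_apply, Finset.filter_eq']

lemma pwt_single_Z {n : ℕ} (i : Fin n) : pwt ((0, Pi.single i 1) : Pauli n) = 1 := by
  simp [pwt, Pi.single_apply, Finset.filter_eq']

lemma symp_single_X {n : ℕ} (s : Pauli n) (i : Fin n) :
    symp s ((Pi.single i 1, 0) : Pauli n) = s.2 i := by
  simp [symp, Pi.single_apply]

lemma symp_single_Z {n : ℕ} (s : Pauli n) (i : Fin n) :
    symp s ((0, Pi.single i 1) : Pauli n) = s.1 i := by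
  simp [symp, Pi.single_apply]

lemma eq_zero_of_forall_pwt_eq_one_symp_eq_zero {n : ℕ} {s : Pauli n}
    (hs : ∀ e, pwt e = 1 → symp s e = 0) : s = 0 :=
  Prod.ext (funext fun i => symp_single_Z s i ▸ hs _ (pwt_single_Z i))
    (funext fun i => symp_single_X s i ▸ hs _ (pwt_single_X i))

theorem pure_errors_exist_general
    (n k : ℕ)
    (S : Submodule F2 (Pauli n))
    (hdim : Module.finrank F2 S = n - k) :
    ∃ (m e : Fin (n - k) → Pauli n),
      LinearIndependent F2 m ∧
      Submodule.span F2 (Set.range m) = S ∧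
      (∀ j, pwt (e j) = 1) ∧
      (∀ i j, symp (m i) (e j) = if i = j then 1 else 0) := by
  have hspan := S.span_range_domRestrict_eq_top (φ := fun e : {e : Pauli n // pwt e = 1} =>
    sympDual e.1) fun s _ hs => eq_zero_of_forall_pwt_eq_one_symp_eq_zero fun e he => hs ⟨e, he⟩
  obtain ⟨b, σ, hσ⟩ := exists_basis_coord_eq_of_span_range_eq_top hdim hspan
  refine ⟨fun i => b i, fun j => σ j, b.linearIndependent.map' S.subtype S.ker_subtype, ?_,
    fun j => (σ j).2, fun i j => ?_⟩
  · change Submodule.span F2 (Set.range (S.subtype ∘ b)) = S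
    rw [Set.range_comp, Submodule.span_image, b.span_eq, Submodule.map_top,
      Submodule.range_subtype]
  · have h := LinearMap.congr_fun (hσ j) (b i)
    rw [Basis.coord_apply, Basis.repr_self, Finsupp.single_apply] at h
    exact h

/-- Lemma 5: for any stabilizer group there is a minimal generating set
together with single-qubit pure errors, each anticommuting with exactly one generator. -/
theorem pure_errors_exist
    (n k : ℕ) (hk : k ≤ n)
    (S : Submodule F2 (Pauli n))
    (hdim : Module.finrank F2 S = n - k)
    (hiso : ∀ a ∈ S, ∀ b ∈ S, symp a b = 0) :
    ∃ (m e : Fin (n - k) → Pauli n),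
      LinearIndependent F2 m ∧
      Submodule.span F2 (Set.range m) = S ∧
      (∀ j, pwt (e j) = 1) ∧
      (∀ i j, symp (m i) (e j) = if i = j then 1 else 0) :=
  pure_errors_exist_general n k S hdim
end

section
/- (Künneth formula / parameters of the hypergraph product.) Let δ ∈ M_{n1 × n0}(F2) and set k0 := n0 − rank(δ) = nullity(δ) and k1 := n1 − rank(δ) = nullity(δᵀ). Define δ̃_{−1} := the block-column matrix [1_{n0} ⊗ δᵀ ; δ ⊗ 1_{n1}] : F2^{n0·n1} → F2^{n0² + n1²}, and δ̃_0 := the block-row matrix [δ ⊗ 1_{n0} , 1_{n1} ⊗ δᵀ] : F2^{n0² + n1²} → F2^{n1·n0}. Then δ̃_0 · δ̃_{−1} = 0 and the Betti numbers of the resulting length-2 complex are: nullity(δ̃_{−1}) = k0·k1; nullity(δ̃_0) − rank(δ̃_{−1}) = k0² + k1²; and n0·n1 − rank(δ̃_0) = k0·k1 (equivalently nullity(δ̃_0ᵀ) = k0·k1). -/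
open Matrix
open scoped Kronecker

/-- Hamming weight of a matrix over `F2` (number of nonzero entries). -/
def mwt {ι κ : Type*} [Fintype ι] [Fintype κ] (M : Matrix ι κ F2) : ℕ :=
  (Finset.univ.filter fun p : ι × κ => M p.1 p.2 ≠ 0).card

/-- Nullity of a matrix over `F2`: dimension of the kernel of the induced linear map. -/
noncomputable def nullity {ι κ : Type*} [Fintype ι] [Fintype κ] (M : Matrix ι κ F2) : ℕ :=
  Module.finrank F2 (LinearMap.ker M.mulVecLin)

/-!
Identify a vector `v : m × n → K` with the matrix `X j i = v (i, j)`. Then `A ⊗ₖ 1` and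
`1 ⊗ₖ B` act as `X ↦ X * Aᵀ` and `X ↦ B * X`, so the common kernel of these two operators
consists of the matrices whose rows lie in `ker A` and whose columns lie in `ker B`. Choosing
matrices `M_A`, `M_B` whose columns are bases of the two kernels, these are exactly the
matrices `M_B * C * M_Aᵀ`, which gives dimension `dim ker A * dim ker B`. Applied to both
differentials of the hypergraph product this computes the outer Betti numbers, and the middle
one follows by rank–nullity. The complex property is characteristic 2: both paths through the
square give `δ ⊗ₖ δᵀ`.
-/

open Module LinearMap

namespace Matrix

variable {K : Type*} [Field K] {l m n p : Type*} [Fintype m] [Fintype n]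

theorem rank_add_finrank_ker_mulVecLin (A : Matrix l m K) :
    A.rank + finrank K (ker A.mulVecLin) = Fintype.card m := by
  rw [rank, finrank_range_add_finrank_ker, finrank_fintype_fun_eq_card]

theorem ker_mulVecLin_fromRows (A : Matrix l m K) (B : Matrix p m K) :
    ker (fromRows A B).mulVecLin = ker A.mulVecLin ⊓ ker B.mulVecLin := by
  ext v
  simp only [mem_ker, Submodule.mem_inf, mulVecLin_apply, fromRows_mulVec, funext_iff, Sum.forall,
    Pi.zero_apply, Sum.elim_inl, Sum.elim_inr]

theorem exists_mul_eq_one_and_range_mulVecLin_eq_ker (A : Matrix l m K) :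
    ∃ (M : Matrix m (Fin (finrank K (ker A.mulVecLin))) K)
      (L : Matrix (Fin (finrank K (ker A.mulVecLin))) m K),
      L * M = 1 ∧ range M.mulVecLin = ker A.mulVecLin := by
  classical
  let f := (ker A.mulVecLin).subtype ∘ₗ (finBasis K (ker A.mulVecLin)).equivFun.symm.toLinearMap
  obtain ⟨g, hgf⟩ := f.exists_leftInverse_of_injective <| ker_eq_bot.2 <|
    Subtype.val_injective.comp (LinearEquiv.injective _)
  refine ⟨toMatrix' f, toMatrix' g, by rw [← toMatrix'_comp, hgf, toMatrix'_id], ?_⟩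
  rw [← toLin'_apply' (toMatrix' f), toLin'_toMatrix',
    range_comp_of_range_eq_top _ (LinearEquiv.range _), Submodule.range_subtype]

theorem mul_eq_zero_of_range_mulVecLin_le_ker {A : Matrix l m K} {M : Matrix m n K}
    (h : range M.mulVecLin ≤ ker A.mulVecLin) : A * M = 0 := by
  classical
  exact ext_of_mulVec_single fun j => by
    rw [← mulVec_mulVec, zero_mulVec]
    exact h ⟨_, rfl⟩

theorem mul_mul_eq_self_of_range_mulVecLin_eq_ker {q : Type*} [Fintype q] [DecidableEq q]
    {A : Matrix l m K} {M : Matrix m q K} {L : Matrix q m K} (hLM : L * M = 1)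
    (hM : range M.mulVecLin = ker A.mulVecLin) {X : Matrix m n K} (hX : A * X = 0) :
    M * (L * X) = X := by
  classical
  exact ext_of_mulVec_single fun j => by
    obtain ⟨c, hc⟩ : X *ᵥ Pi.single j 1 ∈ range M.mulVecLin := by
      rw [hM, mem_ker, mulVecLin_apply, mulVec_mulVec, hX, zero_mulVec]
    rw [← mulVec_mulVec, ← mulVec_mulVec, ← hc, mulVecLin_apply, mulVec_mulVec c L, hLM,
      one_mulVec]

variable [DecidableEq m] [DecidableEq n] {a b : Type*} [Fintype a] [Fintype b] [DecidableEq a]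
  [DecidableEq b]

theorem ker_kronecker_one_inf_ker_one_kronecker {A : Matrix l m K} {B : Matrix p n K}
    {MA : Matrix m a K} {LA : Matrix a m K} {MB : Matrix n b K} {LB : Matrix b n K}
    (hLA : LA * MA = 1) (hMA : range MA.mulVecLin = ker A.mulVecLin)
    (hLB : LB * MB = 1) (hMB : range MB.mulVecLin = ker B.mulVecLin) :
    ker (A ⊗ₖ (1 : Matrix n n K)).mulVecLin ⊓ ker ((1 : Matrix m m K) ⊗ₖ B).mulVecLin =
      range (MA ⊗ₖ MB).mulVecLin := by
  ext v
  obtain ⟨X, rfl⟩ := vec_bijective.surjective v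
  simp only [Submodule.mem_inf, mem_ker, mem_range, mulVecLin_apply,
    vec_bijective.surjective.exists, kronecker_mulVec_vec, vec_eq_zero_iff, vec_inj,
    transpose_one, Matrix.one_mul, Matrix.mul_one]
  constructor
  · rintro ⟨hXA, hBX⟩
    have hAXt : A * Xᵀ = 0 := by
      rw [← transpose_transpose A, ← transpose_mul, hXA, transpose_zero]
    refine ⟨LB * X * LAᵀ, ?_⟩
    calc MB * (LB * X * LAᵀ) * MAᵀ = MB * (LB * X) * (MA * LA)ᵀ := by
          simp only [transpose_mul, Matrix.mul_assoc]
      _ = (MA * (LA * Xᵀ))ᵀ := by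
          rw [mul_mul_eq_self_of_range_mulVecLin_eq_ker hLB hMB hBX]
          simp only [transpose_mul, transpose_transpose, Matrix.mul_assoc]
      _ = X := by rw [mul_mul_eq_self_of_range_mulVecLin_eq_ker hLA hMA hAXt, transpose_transpose]
  · rintro ⟨C, rfl⟩
    have hAMA := mul_eq_zero_of_range_mulVecLin_le_ker hMA.le
    have hBMB := mul_eq_zero_of_range_mulVecLin_le_ker hMB.le
    refine ⟨?_, ?_⟩
    · rw [Matrix.mul_assoc, ← transpose_mul, hAMA, transpose_zero, Matrix.mul_zero]
    · rw [← Matrix.mul_assoc, ← Matrix.mul_assoc, hBMB, Matrix.zero_mul, Matrix.zero_mul]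

theorem finrank_ker_kronecker_one_inf_ker_one_kronecker (A : Matrix l m K) (B : Matrix p n K) :
    finrank K ↥(ker (A ⊗ₖ (1 : Matrix n n K)).mulVecLin ⊓
        ker ((1 : Matrix m m K) ⊗ₖ B).mulVecLin) =
      finrank K (ker A.mulVecLin) * finrank K (ker B.mulVecLin) := by
  obtain ⟨MA, LA, hLA, hMA⟩ := exists_mul_eq_one_and_range_mulVecLin_eq_ker A
  obtain ⟨MB, LB, hLB, hMB⟩ := exists_mul_eq_one_and_range_mulVecLin_eq_ker B
  have hinj : Function.Injective (MA ⊗ₖ MB).mulVecLin :=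
    Function.LeftInverse.injective (g := ((LA ⊗ₖ LB) *ᵥ ·)) fun c => by
      dsimp only
      rw [mulVecLin_apply, mulVec_mulVec, ← mul_kronecker_mul, hLA, hLB, one_kronecker_one,
        one_mulVec]
  rw [ker_kronecker_one_inf_ker_one_kronecker hLA hMA hLB hMB, finrank_range_of_inj hinj,
    finrank_fintype_fun_eq_card, Fintype.card_prod, Fintype.card_fin, Fintype.card_fin]

end Matrix

section HypergraphProduct

variable {K : Type*} [Field K] {p q : Type*} [Fintype p] [Fintype q] [DecidableEq p]
  [DecidableEq q] (δ : Matrix q p K)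

def hypergraphProductDeltaNegOne : Matrix ((p × p) ⊕ (q × q)) (p × q) K :=
  fromRows ((1 : Matrix p p K) ⊗ₖ δᵀ) (δ ⊗ₖ (1 : Matrix q q K))

def hypergraphProductDeltaZero : Matrix (q × p) ((p × p) ⊕ (q × q)) K :=
  fromCols (δ ⊗ₖ (1 : Matrix p p K)) ((1 : Matrix q q K) ⊗ₖ δᵀ)

theorem hypergraphProductDeltaZero_mul_deltaNegOne [CharP K 2] :
    hypergraphProductDeltaZero δ * hypergraphProductDeltaNegOne δ = 0 := by
  rw [hypergraphProductDeltaZero, hypergraphProductDeltaNegOne, fromCols_mul_fromRows,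
    ← mul_kronecker_mul, ← mul_kronecker_mul, Matrix.mul_one, Matrix.one_mul, Matrix.mul_one,
    Matrix.one_mul]
  ext i j
  exact CharTwo.add_self_eq_zero _

theorem finrank_ker_hypergraphProductDeltaNegOne :
    finrank K (ker (hypergraphProductDeltaNegOne δ).mulVecLin) =
      finrank K (ker δ.mulVecLin) * finrank K (ker δᵀ.mulVecLin) := by
  rw [hypergraphProductDeltaNegOne, ker_mulVecLin_fromRows, inf_comm,
    finrank_ker_kronecker_one_inf_ker_one_kronecker]

theorem finrank_ker_transpose_hypergraphProductDeltaZero :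
    finrank K (ker (hypergraphProductDeltaZero δ)ᵀ.mulVecLin) =
      finrank K (ker δᵀ.mulVecLin) * finrank K (ker δ.mulVecLin) := by
  rw [hypergraphProductDeltaZero, transpose_fromCols, ← kroneckerMap_transpose,
    ← kroneckerMap_transpose, transpose_one, transpose_one, transpose_transpose,
    ker_mulVecLin_fromRows, finrank_ker_kronecker_one_inf_ker_one_kronecker]

end HypergraphProduct

theorem rank_add_nullity {ι κ : Type*} [Fintype ι] [Fintype κ] (M : Matrix ι κ F2) :
    M.rank + nullity M = Fintype.card κ :=
  rank_add_finrank_ker_mulVecLin M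

/-- Künneth formula / parameters of the hypergraph product: the hypergraph
product of `δ` with itself is a length-2 chain complex with Betti numbers `k0·k1`,
`k0² + k1²`, `k0·k1`. -/
theorem hypergraph_product_parameters
    (n0 n1 : ℕ) (δ : Matrix (Fin n1) (Fin n0) F2)
    (k0 k1 : ℕ) (hk0 : k0 = nullity δ) (hk1 : k1 = nullity δᵀ)
    (dm1 : Matrix ((Fin n0 × Fin n0) ⊕ (Fin n1 × Fin n1)) (Fin n0 × Fin n1) F2)
    (hdm1 : dm1 = Matrix.fromRows
      ((1 : Matrix (Fin n0) (Fin n0) F2) ⊗ₖ δᵀ)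
      (δ ⊗ₖ (1 : Matrix (Fin n1) (Fin n1) F2)))
    (d0 : Matrix (Fin n1 × Fin n0) ((Fin n0 × Fin n0) ⊕ (Fin n1 × Fin n1)) F2)
    (hd0 : d0 = Matrix.fromCols
      (δ ⊗ₖ (1 : Matrix (Fin n0) (Fin n0) F2))
      ((1 : Matrix (Fin n1) (Fin n1) F2) ⊗ₖ δᵀ)) :
    d0 * dm1 = 0 ∧
    nullity dm1 = k0 * k1 ∧
    (nullity d0 : ℤ) - (dm1.rank : ℤ) = (k0 : ℤ)^2 + (k1 : ℤ)^2 ∧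
    ((n0 * n1 : ℕ) : ℤ) - (d0.rank : ℤ) = (k0 : ℤ) * k1 ∧
    nullity d0ᵀ = k0 * k1 := by
  change dm1 = hypergraphProductDeltaNegOne δ at hdm1
  change d0 = hypergraphProductDeltaZero δ at hd0
  subst hk0 hk1 hdm1 hd0
  have hker_dm1 : nullity (hypergraphProductDeltaNegOne δ) = nullity δ * nullity δᵀ :=
    finrank_ker_hypergraphProductDeltaNegOne δ
  have hker_d0t : nullity (hypergraphProductDeltaZero δ)ᵀ = nullity δᵀ * nullity δ :=
    finrank_ker_transpose_hypergraphProductDeltaZero δ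
  have hn0 := rank_add_nullity δ
  have hn1 := rank_add_nullity δᵀ
  have hdm1 := rank_add_nullity (hypergraphProductDeltaNegOne δ)
  have hd0 := rank_add_nullity (hypergraphProductDeltaZero δ)
  have hd0t := rank_add_nullity (hypergraphProductDeltaZero δ)ᵀ
  rw [rank_transpose] at hn1 hd0t
  rw [hker_dm1] at hdm1
  rw [hker_d0t] at hd0t
  simp only [Fintype.card_prod, Fintype.card_sum, Fintype.card_fin] at hn0 hn1 hdm1 hd0 hd0t
  zify at hn0 hn1 hdm1 hd0 hd0t
  refine ⟨hypergraphProductDeltaZero_mul_deltaNegOne δ, hker_dm1, ?_, ?_,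
    hker_d0t.trans (mul_comm _ _)⟩
  · -- `nullity d0 - rank dm1 = (n0 - n1)^2 + 2 k0 k1`, and `n0 - n1 = k0 - k1`
    linear_combination
      hd0 - hd0t - hdm1 - (n0 - n1 + nullity δ - nullity δᵀ : ℤ) * (hn0 - hn1)
  · push_cast
    linear_combination -hd0t
end

section
/- (Distance of the first level of the hypergraph product: d̃_{−1} = d_0·d_0ᵀ.) Let δ ∈ M_{n1 × n0}(F2). Suppose ker(δ) contains a nonzero vector and ker(δᵀ) contains a nonzero vector, and let d0 := min{|c| : c ∈ ker(δ), c ≠ 0} and d0ᵀ := min{|c| : c ∈ ker(δᵀ), c ≠ 0}. Then min{|R| : R ∈ M_{n0 × n1}(F2), R ≠ 0, δ·R = 0 and R·δ = 0} = d0 · d0ᵀ. (The matrices R with δR = 0 and Rδ = 0 are exactly the reshaped elements of the kernel of the hypergraph-product boundary map δ̃_{−1} = [1⊗δᵀ ; δ⊗1], and |R| is the Hamming weight of the corresponding vector.) -/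
open Matrix
open scoped Kronecker

/-! The outer product `c c'ᵀ` of minimum-weight codewords of `ker δ` and `ker δᵀ` satisfies
`δ R = 0 = R δ` and has weight `d₀ d₀ᵀ`. Conversely, if `R ≠ 0` with `δ R = 0 = R δ`, every column
of `R` lies in `ker δ` and every row in `ker δᵀ`. A nonzero column has at least `d₀` nonzero
entries, and each row through one of them is nonzero, hence has weight at least `d₀ᵀ`. -/

section Weight

variable {ι κ : Type*} [Fintype ι] [Fintype κ]

theorem mwt_eq_sum_vwt (M : Matrix ι κ F2) : mwt M = ∑ i, vwt (M i) := by
  simp [mwt, vwt, Finset.card_filter, Fintype.sum_prod_type]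

theorem mwt_vecMulVec (u : ι → F2) (v : κ → F2) : mwt (vecMulVec u v) = vwt u * vwt v := by
  classical
  rw [mwt_eq_sum_vwt, vwt, Finset.card_filter, Finset.sum_mul]
  refine Finset.sum_congr rfl fun i _ => ?_
  by_cases hi : u i = 0 <;> simp [vwt, vecMulVec_apply, hi]

theorem mul_le_mwt_of_col_of_rows {a b : ℕ} (M : Matrix ι κ F2) (j : κ)
    (hcol : a ≤ vwt (Mᵀ j)) (hrows : ∀ i, M i j ≠ 0 → b ≤ vwt (M i)) :
    a * b ≤ mwt M := by
  classical
  set S := Finset.univ.filter fun i => M i j ≠ 0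
  calc a * b ≤ S.card * b := Nat.mul_le_mul_right _ hcol
    _ = ∑ _i ∈ S, b := by rw [Finset.sum_const, smul_eq_mul]
    _ ≤ ∑ i ∈ S, vwt (M i) := Finset.sum_le_sum fun i hi => hrows i (Finset.mem_filter.mp hi).2
    _ ≤ ∑ i, vwt (M i) := Finset.sum_le_sum_of_subset (Finset.filter_subset _ _)
    _ = mwt M := (mwt_eq_sum_vwt M).symm

end Weight

theorem vecMulVec_ne_zero_of_ne_zero {α m n : Type*} [MulZeroClass α] [NoZeroDivisors α]
    {a : m → α} {b : n → α} (ha : a ≠ 0) (hb : b ≠ 0) : vecMulVec a b ≠ 0 := fun h => by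
  obtain ⟨i, hi⟩ := Function.ne_iff.mp ha
  obtain ⟨j, hj⟩ := Function.ne_iff.mp hb
  exact mul_ne_zero hi hj congr($h i j)

section KernelOfProduct

variable {α : Type*} [CommSemiring α] {l m n : Type*} [Fintype m]

theorem mulVec_transpose_row_eq_zero_of_mul_eq_zero {A : Matrix l m α} {R : Matrix m n α}
    (h : A * R = 0) (j : n) : A *ᵥ Rᵀ j = 0 := by
  rw [← vecMul_transpose, ← mul_apply_eq_vecMul, ← transpose_mul, h, transpose_zero]
  rfl

theorem transpose_mulVec_row_eq_zero_of_mul_eq_zero {R : Matrix l m α} {A : Matrix m n α}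
    (h : R * A = 0) (i : l) : Aᵀ *ᵥ R i = 0 := by
  rw [mulVec_transpose, ← mul_apply_eq_vecMul, h]
  rfl

end KernelOfProduct

/-- distance of the first level of the hypergraph product:
`d̃₋₁ = d₀ · d₀ᵀ`, in reshaped matrix form. -/
theorem hypergraph_product_first_distance
    (n0 n1 d0 d0T : ℕ) (δ : Matrix (Fin n1) (Fin n0) F2)
    (hd0mem : ∃ c : Fin n0 → F2, c ≠ 0 ∧ δ.mulVec c = 0 ∧ vwt c = d0)
    (hd0min : ∀ c : Fin n0 → F2, c ≠ 0 → δ.mulVec c = 0 → d0 ≤ vwt c)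
    (hd0Tmem : ∃ c : Fin n1 → F2, c ≠ 0 ∧ δᵀ.mulVec c = 0 ∧ vwt c = d0T)
    (hd0Tmin : ∀ c : Fin n1 → F2, c ≠ 0 → δᵀ.mulVec c = 0 → d0T ≤ vwt c) :
    (∃ R : Matrix (Fin n0) (Fin n1) F2,
      R ≠ 0 ∧ δ * R = 0 ∧ R * δ = 0 ∧ mwt R = d0 * d0T) ∧
    (∀ R : Matrix (Fin n0) (Fin n1) F2,
      R ≠ 0 → δ * R = 0 → R * δ = 0 → d0 * d0T ≤ mwt R) := by
  obtain ⟨c, hc0, hcker, rfl⟩ := hd0mem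
  obtain ⟨c', hc'0, hc'ker, rfl⟩ := hd0Tmem
  refine ⟨⟨vecMulVec c c', vecMulVec_ne_zero_of_ne_zero hc0 hc'0, ?_, ?_, mwt_vecMulVec c c'⟩, ?_⟩
  · rw [mul_vecMulVec, hcker, zero_vecMulVec]
  · rw [vecMulVec_mul, ← mulVec_transpose, hc'ker]
    exact ext fun _ _ => mul_zero _
  · intro R hR0 hRl hRr
    obtain ⟨i, j, hij⟩ : ∃ i j, R i j ≠ 0 := by
      by_contra! h
      exact hR0 (ext h)
    refine mul_le_mwt_of_col_of_rows R j ?_ fun i' hi' => ?_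
    · exact hd0min _ (fun h => hij (congrFun h i))
        (mulVec_transpose_row_eq_zero_of_mul_eq_zero hRl j)
    · exact hd0Tmin _ (fun h => hi' (congrFun h j))
        (transpose_mulVec_row_eq_zero_of_mul_eq_zero hRr i')
end

section
/- (Distance bound d̃_0 ≥ min(d_0, d_0ᵀ) for the hypergraph product.) Let δ ∈ M_{n1 × n0}(F2). Suppose R_a ∈ M_{n0 × n0}(F2) and R_b ∈ M_{n1 × n1}(F2) satisfy δ·R_a = R_b·δ, and that there is no U ∈ M_{n0 × n1}(F2) with R_a = U·δ and R_b = δ·U (i.e. the pair (R_a, R_b), viewed as a vector, is a nontrivial cycle of the product boundary map δ̃_0 = [δ⊗1 , 1⊗δᵀ]). Then either there exists a nonzero c ∈ ker(δ) with |c| ≤ |R_a| + |R_b|, or there exists a nonzero c' ∈ ker(δᵀ) with |c'| ≤ |R_a| + |R_b|. -/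
open Matrix
open scoped Kronecker

/-!
Suppose every nonzero vector of `ker δ` and of `ker δᵀ` weighs more than `|R_a| + |R_b|`.
Then `R_a` kills `ker δ`: for `y ∈ ker δ` the vector `R_a y` lies in `ker δ` (as
`δ R_a = R_b δ`) and weighs at most `|R_a|`. Likewise `R_bᵀ` kills `ker δᵀ`. Over a field
this factors `R_a = A δ` and `R_b = δ B` through a generalized inverse `G` of `δ`
(`δ G δ = δ`), and `U = A + G δ (B - A)` is then a homotopy `R_a = U δ`, `R_b = δ U`, so the
cycle is trivial.
-/

section Weight

variable {ι κ : Type*} [Fintype ι] [Fintype κ]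

theorem vwt_mulVec_le_mwt (M : Matrix ι κ F2) (v : κ → F2) : vwt (M *ᵥ v) ≤ mwt M := by
  classical
  calc vwt (M *ᵥ v)
      ≤ ((Finset.univ.filter fun p : ι × κ => M p.1 p.2 ≠ 0).image Prod.fst).card := by
        refine Finset.card_le_card fun i hi => ?_
        simp only [Finset.mem_filter, Finset.mem_univ, true_and, Finset.mem_image,
          Prod.exists, exists_and_right, exists_eq_right] at hi ⊢
        contrapose! hi
        simp [mulVec, dotProduct, hi]
    _ ≤ mwt M := Finset.card_image_le

theorem mwt_transpose (M : Matrix ι κ F2) : mwt Mᵀ = mwt M := by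
  unfold mwt
  exact Finset.card_equiv (Equiv.prodComm κ ι) fun p => by
    rw [Finset.mem_filter, Finset.mem_filter]
    simp

theorem mulVec_eq_zero_of_mwt_lt_vwt {ι' : Type*} [Fintype ι'] {δ : Matrix ι' ι F2}
    {R : Matrix ι ι F2} {S : Matrix ι' ι' F2} (hcomm : δ * R = S * δ)
    (hdist : ∀ c, c ≠ 0 → δ *ᵥ c = 0 → mwt R < vwt c) {y : ι → F2} (hy : δ *ᵥ y = 0) :
    R *ᵥ y = 0 := by
  by_contra hne
  have hker : δ *ᵥ (R *ᵥ y) = 0 := by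
    rw [mulVec_mulVec, hcomm, ← mulVec_mulVec, hy, mulVec_zero]
  exact (hdist _ hne hker).not_ge (vwt_mulVec_le_mwt R y)

end Weight

section GeneralizedInverse

variable {K : Type*} [Field K]

theorem LinearMap.exists_comp_comp_eq_self {V W : Type*} [AddCommGroup V] [Module K V]
    [AddCommGroup W] [Module K W] (f : V →ₗ[K] W) : ∃ g : W →ₗ[K] V, f ∘ₗ g ∘ₗ f = f := by
  obtain ⟨r, hr⟩ := (LinearMap.range f).subtype.exists_leftInverse_of_injective
    (Submodule.ker_subtype _)
  obtain ⟨s, hs⟩ := f.rangeRestrict.exists_rightInverse_of_surjective f.range_rangeRestrict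
  refine ⟨s ∘ₗ r, LinearMap.ext fun v => ?_⟩
  have hrf : r (f v) = f.rangeRestrict v := LinearMap.congr_fun hr (f.rangeRestrict v)
  have hsf : f.rangeRestrict (s (f.rangeRestrict v)) = f.rangeRestrict v :=
    LinearMap.congr_fun hs _
  simpa [hrf] using congrArg Subtype.val hsf

variable {m n : Type*} [Fintype m] [Fintype n]

theorem Matrix.exists_mul_mul_eq_self [DecidableEq m] [DecidableEq n] (A : Matrix m n K) :
    ∃ G : Matrix n m K, A * G * A = A := by
  obtain ⟨g, hg⟩ := (toLin' A).exists_comp_comp_eq_self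
  refine ⟨LinearMap.toMatrix' g, toLin'.injective ?_⟩
  simpa [toLin'_mul, LinearMap.comp_assoc] using hg

theorem Matrix.mul_mul_eq_of_ker_le {l : Type*} {A : Matrix m n K} {G : Matrix n m K}
    (hG : A * G * A = A) {R : Matrix l n K} (hker : ∀ y, A *ᵥ y = 0 → R *ᵥ y = 0) :
    R * G * A = R := by
  refine mulVec_injective (funext fun v => ?_)
  have hproj : A *ᵥ (v - (G * A) *ᵥ v) = 0 := by
    rw [mulVec_sub, mulVec_mulVec, ← Matrix.mul_assoc, hG, sub_self]
  have := hker _ hproj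
  rw [mulVec_sub, sub_eq_zero] at this
  simp only [this, mulVec_mulVec, Matrix.mul_assoc]

theorem Matrix.exists_homotopy_of_ker_le [DecidableEq m] [DecidableEq n] {δ : Matrix m n K}
    {Ra : Matrix n n K} {Rb : Matrix m m K} (hcomm : δ * Ra = Rb * δ)
    (ha : ∀ y, δ *ᵥ y = 0 → Ra *ᵥ y = 0) (hb : ∀ x, δᵀ *ᵥ x = 0 → Rbᵀ *ᵥ x = 0) :
    ∃ U : Matrix n m K, Ra = U * δ ∧ Rb = δ * U := by
  obtain ⟨G, hG⟩ := δ.exists_mul_mul_eq_self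
  have hGT : δᵀ * Gᵀ * δᵀ = δᵀ := by
    rw [← transpose_mul, ← transpose_mul, ← Matrix.mul_assoc, hG]
  have hRa : Ra * G * δ = Ra := mul_mul_eq_of_ker_le hG ha
  have hRb : δ * (G * Rb) = Rb := by
    simpa [transpose_mul, Matrix.mul_assoc] using congrArg transpose (mul_mul_eq_of_ker_le hGT hb)
  set A := Ra * G
  set B := G * Rb
  have hD : δ * (B - A) * δ = 0 := by
    rw [Matrix.mul_sub, Matrix.sub_mul, hRb, Matrix.mul_assoc δ A, hRa, hcomm, sub_self]
  refine ⟨A + G * (δ * (B - A)), ?_, ?_⟩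
  · rw [Matrix.add_mul, Matrix.mul_assoc G, hD, Matrix.mul_zero, add_zero, hRa]
  · rw [Matrix.mul_add, ← Matrix.mul_assoc δ G (δ * (B - A)), ← Matrix.mul_assoc (δ * G), hG,
      Matrix.mul_sub, add_sub_cancel, hRb]

end GeneralizedInverse

/-- distance bound `d̃₀ ≥ min(d₀, d₀ᵀ)` for the hypergraph product:
a nontrivial cycle `(R_a, R_b)` of the product boundary map yields a nonzero kernel
vector of `δ` or of `δᵀ` of weight at most `|R_a| + |R_b|`. -/
theorem hypergraph_product_second_distance
    (n0 n1 : ℕ) (δ : Matrix (Fin n1) (Fin n0) F2)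
    (Ra : Matrix (Fin n0) (Fin n0) F2) (Rb : Matrix (Fin n1) (Fin n1) F2)
    (hcycle : δ * Ra = Rb * δ)
    (hnontriv : ¬ ∃ U : Matrix (Fin n0) (Fin n1) F2, Ra = U * δ ∧ Rb = δ * U) :
    (∃ c : Fin n0 → F2, c ≠ 0 ∧ δ.mulVec c = 0 ∧ vwt c ≤ mwt Ra + mwt Rb) ∨
    (∃ c' : Fin n1 → F2, c' ≠ 0 ∧ δᵀ.mulVec c' = 0 ∧ vwt c' ≤ mwt Ra + mwt Rb) := by
  by_contra! ⟨heavy0, heavy1⟩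
  have hcycleT : δᵀ * Rbᵀ = Raᵀ * δᵀ := by rw [← transpose_mul, ← hcycle, transpose_mul]
  refine hnontriv (exists_homotopy_of_ker_le hcycle (fun y hy => ?_) (fun x hx => ?_))
  · refine mulVec_eq_zero_of_mwt_lt_vwt hcycle (fun c hc hδc => ?_) hy
    exact (Nat.le_add_right _ _).trans_lt (heavy0 c hc hδc)
  · refine mulVec_eq_zero_of_mwt_lt_vwt hcycleT (fun c hc hδc => ?_) hx
    rw [mwt_transpose]
    exact (Nat.le_add_left _ _).trans_lt (heavy1 c hc hδc)
end

section
/- (First soundness lemma.) Let δ ∈ M_{n1 × n0}(F2) and t ∈ ℕ. Assume every nonzero c ∈ ker(δ) has |c| ≥ t and every nonzero c ∈ ker(δᵀ) has |c| ≥ t (i.e. t ≤ min(d_0, d_0ᵀ)). Then: (a) for every R ∈ M_{n1 × n0}(F2), if |δᵀ·R| + |R·δᵀ| < t then there exists R' ∈ M_{n1 × n0}(F2) with δᵀ·R' = δᵀ·R, R'·δᵀ = R·δᵀ, and 4·|R'| ≤ (|δᵀ·R| + |R·δᵀ|)²; (b) for every R ∈ M_{n0 × n1}(F2), if |R·δ|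 + |δ·R| < t then there exists R' ∈ M_{n0 × n1}(F2) with R'·δ = R·δ, δ·R' = δ·R, and 4·|R'| ≤ (|R·δ| + |δ·R|)². (In vector form: both maps δ̃_0ᵀ and δ̃_{−1} of the hypergraph product of δ with itself are (t, f)-sound with soundness function f(x) = x²/4.) -/
open Matrix
open scoped Kronecker

/-- The linear map zeroing out the coordinates in `I`. -/
def zeroOn {n : ℕ} (I : Finset (Fin n)) : (Fin n → F2) →ₗ[F2] (Fin n → F2) where
  toFun v := fun i => if i ∈ I then 0 else v i
  map_add' u v := by funext i; by_cases h : i ∈ I <;> simp [h]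
  map_smul' c v := by funext i; by_cases h : i ∈ I <;> simp [h]

@[simp] lemma zeroOn_apply {n : ℕ} (I : Finset (Fin n)) (v : Fin n → F2) (i : Fin n) :
    zeroOn I v i = if i ∈ I then 0 else v i := rfl

lemma arith_aux (x u v A B : ℕ) (h1 : x ≤ u * v) (h2 : u ≤ B) (h3 : v ≤ A) :
    4 * x ≤ (A + B)^2 := by
  have h4 : 4 * x ≤ 4 * (B * A) :=
    Nat.mul_le_mul_left 4 (le_trans h1 (Nat.mul_le_mul h2 h3))
  have h5 : 4 * (B * A) ≤ (A + B)^2 := by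
    zify
    nlinarith [sq_nonneg ((A : ℤ) - B)]
  omega

lemma key_lemma (n0 n1 t : ℕ) (δ : Matrix (Fin n1) (Fin n0) F2)
    (hker : ∀ c : Fin n0 → F2, c ≠ 0 → δ.mulVec c = 0 → t ≤ vwt c)
    (hkerT : ∀ c : Fin n1 → F2, c ≠ 0 → δᵀ.mulVec c = 0 → t ≤ vwt c)
    (R : Matrix (Fin n1) (Fin n0) F2)
    (hlt : mwt (δᵀ * R) + mwt (R * δᵀ) < t) :
    ∃ R' : Matrix (Fin n1) (Fin n0) F2,
      δᵀ * R' = δᵀ * R ∧ R' * δᵀ = R * δᵀ ∧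
      4 * mwt R' ≤ (mwt (δᵀ * R) + mwt (R * δᵀ))^2 := by
  classical
  set a := mwt (δᵀ * R) with ha
  set b := mwt (R * δᵀ) with hb
  set I : Finset (Fin n1) := Finset.univ.filter (fun i => ∃ m, (R * δᵀ) i m ≠ 0) with hIdef
  set J : Finset (Fin n0) := Finset.univ.filter (fun j => ∃ m, (δᵀ * R) m j ≠ 0) with hJdef
  have hIb : I.card ≤ b := by
    have hsub : I ⊆ (Finset.univ.filter fun p : Fin n1 × Fin n1 =>
        (R * δᵀ) p.1 p.2 ≠ 0).image Prod.fst := by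
      intro i hi
      simp only [hIdef, Finset.mem_filter, Finset.mem_univ, true_and] at hi
      obtain ⟨m, hm⟩ := hi
      exact Finset.mem_image.mpr ⟨(i, m), by simp [hm], rfl⟩
    calc I.card ≤ _ := Finset.card_le_card hsub
      _ ≤ _ := Finset.card_image_le
  have hJa : J.card ≤ a := by
    have hsub : J ⊆ (Finset.univ.filter fun p : Fin n0 × Fin n0 =>
        (δᵀ * R) p.1 p.2 ≠ 0).image Prod.snd := by
      intro j hj
      simp only [hJdef, Finset.mem_filter, Finset.mem_univ, true_and] at hj
      obtain ⟨m, hm⟩ := hj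
      exact Finset.mem_image.mpr ⟨(m, j), by simp [hm], rfl⟩
    calc J.card ≤ _ := Finset.card_le_card hsub
      _ ≤ _ := Finset.card_image_le
  have hIt : I.card < t := lt_of_le_of_lt (le_trans hIb (Nat.le_add_left b a)) hlt
  have hJt : J.card < t := lt_of_le_of_lt (le_trans hJa (Nat.le_add_right a b)) hlt
  set π := zeroOn I with hπdef
  set ρ := zeroOn J with hρdef
  set CT := LinearMap.ker (Matrix.mulVecLin δᵀ) with hCT
  set C := LinearMap.ker (Matrix.mulVecLin δ) with hC
  -- injectivity of π on CT
  have hπinj : LinearMap.ker (π.comp CT.subtype) = ⊥ := by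
    rw [LinearMap.ker_eq_bot']
    rintro ⟨w, hw⟩ h0
    have hπw : π w = 0 := h0
    by_contra hne
    have hwne : w ≠ 0 := fun h => hne (Subtype.ext h)
    have hsupp : (Finset.univ.filter fun i => w i ≠ 0) ⊆ I := by
      intro i hi
      simp only [Finset.mem_filter, Finset.mem_univ, true_and] at hi
      by_contra hiI
      have := congrFun hπw i
      simp [hπdef, hiI] at this
      exact hi this
    have ht : t ≤ vwt w := by
      apply hkerT w hwne
      have := hw
      rw [hCT, LinearMap.mem_ker, Matrix.mulVecLin_apply] at this
      exact this
    have : vwt w ≤ I.card := Finset.card_le_card hsupp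
    omega
  obtain ⟨g, hg⟩ := (π.comp CT.subtype).exists_leftInverse_of_injective hπinj
  have hgw : ∀ w : CT, g (π ↑w) = w := by
    intro w
    have := DFunLike.congr_fun hg w
    simpa using this
  -- injectivity of ρ on C
  have hρinj : LinearMap.ker (ρ.comp C.subtype) = ⊥ := by
    rw [LinearMap.ker_eq_bot']
    rintro ⟨w, hw⟩ h0
    have hρw : ρ w = 0 := h0
    by_contra hne
    have hwne : w ≠ 0 := fun h => hne (Subtype.ext h)
    have hsupp : (Finset.univ.filter fun i => w i ≠ 0) ⊆ J := by
      intro i hi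
      simp only [Finset.mem_filter, Finset.mem_univ, true_and] at hi
      by_contra hiJ
      have := congrFun hρw i
      simp [hρdef, hiJ] at this
      exact hi this
    have ht : t ≤ vwt w := by
      apply hker w hwne
      have := hw
      rw [hC, LinearMap.mem_ker, Matrix.mulVecLin_apply] at this
      exact this
    have : vwt w ≤ J.card := Finset.card_le_card hsupp
    omega
  obtain ⟨h', hh'⟩ := (ρ.comp C.subtype).exists_leftInverse_of_injective hρinj
  have hh'c : ∀ w : C, h' (ρ ↑w) = w := by
    intro w
    have := DFunLike.congr_fun hh' w
    simpa using this
  -- columns outside J are in CT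
  have colR_mem : ∀ j ∉ J, (fun i => R i j) ∈ CT := by
    intro j hj
    rw [hCT, LinearMap.mem_ker]
    have hz : ∀ m, (δᵀ * R) m j = 0 := by
      simp only [hJdef, Finset.mem_filter, Finset.mem_univ, true_and, not_exists,
        not_not] at hj
      exact hj
    funext m
    have := hz m
    rw [Matrix.mul_apply] at this
    simp only [Matrix.mulVecLin_apply, Matrix.mulVec, dotProduct, Pi.zero_apply]
    exact this
  -- fact A : K agrees with R on columns outside J
  have hAgree : ∀ j ∉ J, ((g (π (fun i' => R i' j)) : CT) : Fin n1 → F2) = fun i => R i j := by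
    intro j hj
    have h1 : g (π (fun i' => R i' j)) = ⟨fun i' => R i' j, colR_mem j hj⟩ :=
      hgw ⟨fun i' => R i' j, colR_mem j hj⟩
    rw [h1]
  -- fact B : every punctured column is in π '' CT
  have hB : ∀ j, ∃ w ∈ CT, π w = π (fun i => R i j) := by
    intro j
    set Mm : Matrix (Fin n1) (Fin n0) F2 :=
      Matrix.of (fun i j' => if i ∈ I then 0 else R i j') with hMm
    have hπcol : ∀ j', π (fun i => R i j') = fun i => Mm i j' := by
      intro j'
      funext i
      simp [hπdef, hMm]
    have hrowC : ∀ i, (fun j' => Mm i j') ∈ C := by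
      intro i
      by_cases hi : i ∈ I
      · have hzero : (fun j' => Mm i j') = (0 : Fin n0 → F2) := by
          funext j'; simp [hMm, hi]
        rw [hzero]; exact zero_mem _
      · rw [hC, LinearMap.mem_ker]
        have hi' : ∀ m, (R * δᵀ) i m = 0 := by
          have hi2 := hi
          simp only [hIdef, Finset.mem_filter, Finset.mem_univ, true_and, not_exists,
            not_not] at hi2
          exact hi2
        funext m
        simp only [Matrix.mulVecLin_apply, Matrix.mulVec, dotProduct, Pi.zero_apply]
        have h2 := hi' m
        rw [Matrix.mul_apply] at h2
        calc ∑ j', δ m j' * Mm i j' = ∑ j', R i j' * δᵀ j' m := by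
              refine Finset.sum_congr rfl (fun j' _ => ?_)
              simp [hMm, hi, Matrix.transpose_apply, mul_comm]
          _ = 0 := h2
    have hV : (fun i => Mm i j) ∈ CT.map π := by
      set c : Fin n0 → F2 :=
        fun j' => ((h' (fun j2 => if j' = j2 then (1:F2) else 0) : C) : Fin n0 → F2) j with hcdef
      have hexp : (fun i => Mm i j)
          = ∑ j' : Fin n0, (fun i => (if j' ∈ J then 0 else Mm i j') * c j') := by
        funext i
        rw [Finset.sum_apply]
        have h1 : (⟨fun j' => Mm i j', hrowC i⟩ : C) = h' (ρ (fun j' => Mm i j')) :=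
          (hh'c _).symm
        have h2 : Mm i j = ((h' (ρ (fun j' => Mm i j')) : C) : Fin n0 → F2) j := by
          rw [← h1]
        rw [h2]
        have h3 : ρ (fun j' => Mm i j')
            = ∑ j' : Fin n0, (ρ (fun j2 => Mm i j2)) j' • (fun j2 => if j' = j2 then (1:F2) else 0) :=
          pi_eq_sum_univ _
        rw [h3, map_sum, AddSubmonoidClass.coe_finset_sum, Finset.sum_apply]
        refine Finset.sum_congr rfl (fun j' _ => ?_)
        rw [_root_.map_smul]
        simp only [SetLike.val_smul, Pi.smul_apply, smul_eq_mul, hρdef, zeroOn_apply, hcdef]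
      rw [hexp]
      apply Submodule.sum_mem
      intro j' _
      by_cases hj' : j' ∈ J
      · have hz : (fun i => (if j' ∈ J then 0 else Mm i j') * c j') = (0 : Fin n1 → F2) := by
          funext i; simp [hj']
        rw [hz]; exact zero_mem _
      · have heq : (fun i => (if j' ∈ J then 0 else Mm i j') * c j')
            = c j' • π (fun i => R i j') := by
          funext i
          simp only [hj', if_false, Pi.smul_apply, smul_eq_mul, hπdef, zeroOn_apply, hMm,
            Matrix.of_apply]
          ring
        rw [heq]
        exact Submodule.smul_mem _ _ (Submodule.mem_map_of_mem (colR_mem j' hj'))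
    obtain ⟨w, hw, hw2⟩ := hV
    exact ⟨w, hw, by rw [hw2, hπcol j]⟩
  -- the correction matrix K
  set K : Matrix (Fin n1) (Fin n0) F2 :=
    Matrix.of (fun i j => ((g (π (fun i' => R i' j)) : CT) : Fin n1 → F2) i) with hK
  have hδTK : δᵀ * K = 0 := by
    ext m j
    have hmem : δᵀ.mulVecLin ((g (π (fun i' => R i' j)) : CT) : Fin n1 → F2) = 0 :=
      (g (π (fun i' => R i' j))).2
    rw [Matrix.mulVecLin_apply] at hmem
    have := congrFun hmem m
    simp only [Matrix.mulVec, dotProduct, Pi.zero_apply] at this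
    simp only [Matrix.mul_apply, hK, Matrix.of_apply, Matrix.zero_apply]
    exact this
  have hKδT : K * δᵀ = 0 := by
    ext i m
    have hsum : (∑ j, (δᵀ j m) • (g (π (fun i' => R i' j)))) = 0 := by
      have h1 : (∑ j, (δᵀ j m) • (g (π (fun i' => R i' j))))
          = g (π (∑ j, (δᵀ j m) • (fun i' => R i' j))) := by
        rw [map_sum, map_sum]
        refine Finset.sum_congr rfl (fun j _ => ?_)
        rw [_root_.map_smul, _root_.map_smul]
      rw [h1]
      have hz : π (∑ j, (δᵀ j m) • (fun i' => R i' j)) = 0 := by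
        funext i'
        simp only [hπdef, zeroOn_apply, Pi.zero_apply]
        by_cases hi : i' ∈ I
        · simp [hi]
        · have hiz : ∀ m', (R * δᵀ) i' m' = 0 := by
            have hi2 := hi
            simp only [hIdef, Finset.mem_filter, Finset.mem_univ, true_and, not_exists,
              not_not] at hi2
            exact hi2
          simp only [hi, if_false, Finset.sum_apply, Pi.smul_apply, smul_eq_mul]
          have h2 := hiz m
          rw [Matrix.mul_apply] at h2
          calc ∑ j, δᵀ j m * R i' j = ∑ j, R i' j * δᵀ j m := by
                refine Finset.sum_congr rfl (fun j _ => mul_comm _ _)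
            _ = 0 := h2
      rw [hz, map_zero]
    have h2 : ∑ j, δᵀ j m * ((g (π (fun i' => R i' j)) : CT) : Fin n1 → F2) i = 0 := by
      have := congrArg (fun z : CT => (z : Fin n1 → F2) i) hsum
      simpa [AddSubmonoidClass.coe_finset_sum, Finset.sum_apply] using this
    simp only [Matrix.mul_apply, hK, Matrix.of_apply, Matrix.zero_apply]
    calc ∑ j, ((g (π (fun i' => R i' j)) : CT) : Fin n1 → F2) i * δᵀ j m
        = ∑ j, δᵀ j m * ((g (π (fun i' => R i' j)) : CT) : Fin n1 → F2) i :=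
          Finset.sum_congr rfl (fun j _ => mul_comm _ _)
      _ = 0 := h2
  have haddself : ∀ x : F2, x + x = 0 := by decide
  refine ⟨R + K, ?_, ?_, ?_⟩
  · rw [Matrix.mul_add, hδTK, add_zero]
  · rw [Matrix.add_mul, hKδT, add_zero]
  · have hsupport : ∀ p : Fin n1 × Fin n0, (R + K) p.1 p.2 ≠ 0 → p.1 ∈ I ∧ p.2 ∈ J := by
      rintro ⟨i, j⟩ hne
      by_cases hj : j ∈ J
      · refine ⟨?_, hj⟩
        by_contra hi
        obtain ⟨w, hw, hπw⟩ := hB j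
        have hgj : g (π (fun i' => R i' j)) = ⟨w, hw⟩ := by
          rw [← hπw]; exact hgw ⟨w, hw⟩
        have hK2 : K i j = w i := by simp [hK, hgj]
        have hwi : w i = R i j := by
          have := congrFun hπw i
          simp only [hπdef, zeroOn_apply, hi, if_false] at this
          exact this
        apply hne
        show R i j + K i j = 0
        rw [hK2, hwi]
        exact haddself _
      · exfalso
        apply hne
        show R i j + K i j = 0
        have hK2 : K i j = R i j := by
          have := hAgree j hj
          simp only [hK, Matrix.of_apply]
          rw [this]
        rw [hK2]
        exact haddself _
    have hm : mwt (R + K) ≤ I.card * J.card := by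
      rw [mwt, ← Finset.card_product]
      apply Finset.card_le_card
      intro p hp
      simp only [Finset.mem_filter, Finset.mem_univ, true_and] at hp
      exact Finset.mem_product.mpr (hsupport p hp)
    exact arith_aux (mwt (R + K)) I.card J.card a b hm hIb hJa

/-- First soundness lemma, Lemma 6: both maps `δ̃₀ᵀ` and `δ̃₋₁` of the
hypergraph product of `δ` with itself are `(t, x²/4)`-sound, in reshaped matrix form. -/
theorem first_soundness_lemma
    (n0 n1 t : ℕ) (δ : Matrix (Fin n1) (Fin n0) F2)
    (hker : ∀ c : Fin n0 → F2, c ≠ 0 → δ.mulVec c = 0 → t ≤ vwt c)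
    (hkerT : ∀ c : Fin n1 → F2, c ≠ 0 → δᵀ.mulVec c = 0 → t ≤ vwt c) :
    (∀ R : Matrix (Fin n1) (Fin n0) F2,
      mwt (δᵀ * R) + mwt (R * δᵀ) < t →
      ∃ R' : Matrix (Fin n1) (Fin n0) F2,
        δᵀ * R' = δᵀ * R ∧ R' * δᵀ = R * δᵀ ∧
        4 * mwt R' ≤ (mwt (δᵀ * R) + mwt (R * δᵀ))^2) ∧
    (∀ R : Matrix (Fin n0) (Fin n1) F2,
      mwt (R * δ) + mwt (δ * R) < t →
      ∃ R' : Matrix (Fin n0) (Fin n1) F2,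
        R' * δ = R * δ ∧ δ * R' = δ * R ∧
        4 * mwt R' ≤ (mwt (R * δ) + mwt (δ * R))^2) := by
  constructor
  · intro R hR
    exact key_lemma n0 n1 t δ hker hkerT R hR
  · intro R hR
    have hkT : ∀ c : Fin n0 → F2, c ≠ 0 → (δᵀ)ᵀ.mulVec c = 0 → t ≤ vwt c := by
      simpa [Matrix.transpose_transpose] using hker
    have hR' : mwt ((δᵀ)ᵀ * R) + mwt (R * (δᵀ)ᵀ) < t := by
      rw [Matrix.transpose_transpose]
      omega
    obtain ⟨R', h1, h2, h3⟩ := key_lemma n1 n0 t δᵀ hkerT hkT R hR'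
    rw [Matrix.transpose_transpose] at h1 h3
    exact ⟨R', h2, h1, by rw [Nat.add_comm]; exact h3⟩
end
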